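/- For every positive integer vector a = (a₁, …, a_r) and every natural number n, the restricted partition function satisfies p_a(n) = Σ C((n − (a₁j₁ + ⋯ + a_rj_r))/D + r − 1, r − 1), where the sum runs over all tuples j ∈ J with a₁j₁ + ⋯ + a_rj_r ≡ n (mod D) and a₁j₁ + ⋯ + a_rj_r ≤ n (for such j the quantity (n − (a₁j₁ + ⋯ + a_rj_r))/D is a nonnegative integer, and C(·,·) denotes the ordinary binomial coefficient). -/
import Mathlib

open Finset

private lemma card_tuple_sum (r m : ℕ) (hr : 1 ≤ r) :
    Nat.card {y : Fin r → ℕ // ∑ i, y i = m} = (m + (r - 1)).choose (r - 1) := by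
  rw [Nat.card_congr (Sym.equivNatSumOfFintype (Fin r) m).symm,
    Nat.card_eq_fintype_card, Sym.card_sym_eq_choose, Fintype.card_fin]
  have h1 : r + m - 1 = m + (r - 1) := by omega
  rw [h1, ← Nat.choose_symm (by omega : m ≤ m + (r - 1))]
  congr 1
  omega

/-- For a vector `a` of positive integers, the restricted partition
function `p_a(n)` (the number of `x : Fin r → ℕ` with `∑ i, a i * x i = n`) equals the
sum of binomial coefficients `C((n - a·j)/D + r - 1, r - 1)` over all `j` in the box
`J = ∏ₖ {0, …, D / aₖ - 1}` with `a·j ≡ n (mod D)` and `a·j ≤ n`,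
where `D = lcm(a₁, …, a_r)`. -/
theorem restricted_partition_eq_sum_choose
    (r : ℕ) (hr : 1 ≤ r) (a : Fin r → ℕ) (ha : ∀ i, 0 < a i)
    (D : ℕ) (hD : D = Finset.lcm Finset.univ a)
    (J : Finset (Fin r → ℕ))
    (hJ : J = Fintype.piFinset fun k => Finset.range (D / a k))
    (n : ℕ) :
    Nat.card {x : Fin r → ℕ // ∑ i, a i * x i = n} =
      ∑ j ∈ J.filter
          (fun j => (∑ i, a i * j i) % D = n % D ∧ (∑ i, a i * j i) ≤ n),
        Nat.choose ((n - ∑ i, a i * j i) / D + (r - 1)) (r - 1) := by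
  classical
  -- basic facts about D
  have haD : ∀ k, a k ∣ D := fun k => hD ▸ Finset.dvd_lcm (Finset.mem_univ k)
  have hD0 : 0 < D := by
    rcases Nat.eq_zero_or_pos D with h | h
    · exfalso
      rw [hD, Finset.lcm_eq_zero_iff] at h
      obtain ⟨k, -, hk⟩ := h
      exact (ha k).ne' hk
    · exact h
  have haq : ∀ k, a k * (D / a k) = D := fun k => Nat.mul_div_cancel' (haD k)
  have hq0 : ∀ k, 0 < D / a k := fun k =>
    Nat.div_pos (Nat.le_of_dvd hD0 (haD k)) (ha k)
  set q : Fin r → ℕ := fun k => D / a k with hq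
  -- the solution set as a finset
  set S : Finset (Fin r → ℕ) :=
    (Fintype.piFinset fun _ => Finset.range (n + 1)).filter
      (fun x => ∑ i, a i * x i = n) with hS
  have hxle : ∀ x : Fin r → ℕ, (∑ i, a i * x i = n) → ∀ k, x k ≤ n := by
    intro x hx k
    calc x k ≤ a k * x k := Nat.le_mul_of_pos_left _ (ha k)
    _ ≤ ∑ i, a i * x i := Finset.single_le_sum (f := fun i => a i * x i)
        (fun i _ => Nat.zero_le _) (Finset.mem_univ k)
    _ = n := hx
  have hmemS : ∀ x : Fin r → ℕ, x ∈ S ↔ ∑ i, a i * x i = n := by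
    intro x
    simp only [hS, Finset.mem_filter, Fintype.mem_piFinset, Finset.mem_range,
      Nat.lt_succ_iff]
    constructor
    · exact fun h => h.2
    · exact fun h => ⟨fun k => hxle x h k, h⟩
  -- the key decomposition identity
  have hdecomp : ∀ x : Fin r → ℕ,
      ∑ i, a i * x i = (∑ i, a i * (x i % q i)) + D * ∑ i, x i / q i := by
    intro x
    rw [Finset.mul_sum, ← Finset.sum_add_distrib]
    refine Finset.sum_congr rfl fun i _ => ?_
    conv_lhs => rw [← Nat.mod_add_div (x i) (q i)]
    rw [Nat.mul_add, ← Nat.mul_assoc, haq i]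
  -- fibers
  set f : (Fin r → ℕ) → (Fin r → ℕ) := fun x k => x k % q k with hf
  set Jf : Finset (Fin r → ℕ) := J.filter
      (fun j => (∑ i, a i * j i) % D = n % D ∧ (∑ i, a i * j i) ≤ n) with hJf
  have hfib : ∀ x ∈ S, f x ∈ Jf := by
    intro x hxS
    have hx : ∑ i, a i * x i = n := (hmemS x).1 hxS
    have hid := hdecomp x
    rw [hx] at hid
    simp only [hJf, Finset.mem_filter, hJ, Fintype.mem_piFinset, Finset.mem_range]
    refine ⟨?_, ?_, ?_⟩
    · intro k; exact Nat.mod_lt _ (hq0 k)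
    · rw [hid]; exact (Nat.add_mul_mod_self_left _ _ _).symm
    · show ∑ i, a i * (x i % q i) ≤ n
      clear_value S f Jf
      omega
  have hcard : Nat.card {x : Fin r → ℕ // ∑ i, a i * x i = n} = S.card := by
    rw [← Nat.card_eq_finsetCard]
    exact Nat.card_congr (Equiv.subtypeEquivRight fun x => (hmemS x).symm)
  rw [hcard, Finset.card_eq_sum_card_fiberwise hfib]
  clear hcard
  refine Finset.sum_congr rfl fun j hj => ?_
  -- unpack conditions on j
  simp only [hJf, Finset.mem_filter, hJ, Fintype.mem_piFinset, Finset.mem_range] at hj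
  obtain ⟨hjbox, hjmod, hjle⟩ := hj
  set s : ℕ := ∑ i, a i * j i with hs
  have hdvd : D ∣ n - s := (Nat.modEq_iff_dvd' hjle).mp hjmod
  set m : ℕ := (n - s) / D with hm
  have hDm : D * m = n - s := Nat.mul_div_cancel' hdvd
  -- the fiber is in bijection with tuples summing to m
  have hfibcard : (S.filter fun x => f x = j).card =
      Nat.card {y : Fin r → ℕ // ∑ i, y i = m} := by
    rw [← Nat.card_eq_finsetCard]
    have hforward : ∀ x : Fin r → ℕ, x ∈ S.filter (fun x => f x = j) →
        ∑ k, x k / q k = m := by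
      intro x hx
      rw [Finset.mem_filter, hmemS] at hx
      obtain ⟨hxn, hxf⟩ := hx
      have hid := hdecomp x
      have hfx : ∀ i, x i % q i = j i := fun i => congrFun hxf i
      simp only [hfx] at hid
      rw [hxn, ← hs] at hid
      have h1 : D * (∑ k, x k / q k) = n - s := by omega
      exact Nat.eq_of_mul_eq_mul_left hD0 (h1.trans hDm.symm)
    have hbackward : ∀ y : Fin r → ℕ, ∑ i, y i = m →
        (fun k => j k + q k * y k) ∈ S.filter (fun x => f x = j) := by
      intro y hy
      have hsum : ∑ i, a i * (j i + q i * y i) = n := by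
        have : ∀ i, a i * (j i + q i * y i) = a i * j i + D * y i := by
          intro i
          rw [Nat.mul_add, ← Nat.mul_assoc, haq i]
        rw [Finset.sum_congr rfl fun i _ => this i, Finset.sum_add_distrib,
          ← Finset.mul_sum, hy, ← hs]
        omega
      rw [Finset.mem_filter, hmemS]
      refine ⟨hsum, ?_⟩
      funext k
      simp only [hf]
      rw [Nat.add_mul_mod_self_left, Nat.mod_eq_of_lt (hjbox k)]
    refine Nat.card_congr ?_
    refine
      { toFun := fun x => ⟨fun k => x.1 k / q k, hforward x.1 x.2⟩
        invFun := fun y => ⟨fun k => j k + q k * y.1 k, hbackward y.1 y.2⟩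
        left_inv := ?_
        right_inv := ?_ }
    · -- left inverse
      rintro ⟨x, hx⟩
      rw [Finset.mem_filter] at hx
      have hfx : ∀ i, x i % q i = j i := fun i => congrFun hx.2 i
      apply Subtype.ext
      funext k
      show j k + q k * (x k / q k) = x k
      rw [← hfx k]
      exact Nat.mod_add_div _ _
    · -- right inverse
      rintro ⟨y, hy⟩
      apply Subtype.ext
      funext k
      show (j k + q k * y k) / q k = y k
      rw [Nat.add_mul_div_left _ _ (hq0 k), Nat.div_eq_of_lt (hjbox k), Nat.zero_add]
  rw [hfibcard, card_tuple_sum r m hr]
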